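/- There exists C > 0 such that the following holds. Let w : ℝ² → ℝ be measurable with ‖w‖_{L¹₄} := ∫_{ℝ²} ⟨x⟩⁴ |w(x)| dx < ∞ and ‖w‖_{L^∞₄} := ess sup_{x∈ℝ²} ⟨x⟩⁴ |w(x)| < ∞. Define, for x ∈ ℝ², U(x) := ∫_{ℝ²} K(x,y) w(y) dy ∈ ℝ³, where K(x,y) := −(1/(4π)) ∫_{ℝ} ( ((x₁,x₂,0) − (R_a y, a)) × ξ((R_a y, a)) ) (|x − R_a y|² + a²)^{−3/2} da (cross product in ℝ³), and set Hw(x) := (U¹(x), U²(x)) + (−x₂, x₁) U³(x) ∈ ℝ². Then | ∫_{ℝ²} w(x) Hw(x) dx + (1/(4π)) ∫_{ℝ²} ∫_{ℝ²} log(1/|x−y|) 1_{|x−y|≤1} (x^⊥/⟨x⟩) w(x) w(y) dx dy | ≤ C ( ‖w‖_{L¹₄} + ‖w‖_{L^∞₄} )², where the inequality is between vectors in ℝ² measured in the Euclidean norm. -/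

import Mathlib

open MeasureTheory Real intervalIntegral

/-- Euclidean norm on `ℝ²`. -/
noncomputable def vnorm (x : ℝ × ℝ) : ℝ := Real.sqrt (x.1 ^ 2 + x.2 ^ 2)

/-- Rotation `R_a` on `ℝ²`. -/
noncomputable def vrot (a : ℝ) (x : ℝ × ℝ) : ℝ × ℝ :=
  (x.1 * Real.cos a + x.2 * Real.sin a, -x.1 * Real.sin a + x.2 * Real.cos a)

/-- Japanese bracket `⟨x⟩ = √(1+|x|²)` on `ℝ²`. -/
noncomputable def jap (x : ℝ × ℝ) : ℝ := Real.sqrt (1 + x.1 ^ 2 + x.2 ^ 2)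

/-- Cross product on `ℝ³ = ℝ × ℝ × ℝ`. -/
def cross3 (u v : ℝ × ℝ × ℝ) : ℝ × ℝ × ℝ :=
  (u.2.1 * v.2.2 - u.2.2 * v.2.1, u.2.2 * v.1 - u.1 * v.2.2, u.1 * v.2.1 - u.2.1 * v.1)

/-- The vector field `ξ(z) = (z₂, −z₁, 1)`. -/
def xi3 (z : ℝ × ℝ × ℝ) : ℝ × ℝ × ℝ := (z.2.1, -z.1, 1)

/-- Euclidean norm on `ℝ³ = ℝ × ℝ × ℝ`. -/
noncomputable def norm3 (v : ℝ × ℝ × ℝ) : ℝ := Real.sqrt (v.1 ^ 2 + v.2.1 ^ 2 + v.2.2 ^ 2)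

/-- The perpendicular vector `x^⊥ = (−x₂, x₁)`. -/
def vperp (x : ℝ × ℝ) : ℝ × ℝ := (-x.2, x.1)

/-- The modified Biot–Savart kernel of the helical Euler equation. -/
noncomputable def biotK (x y : ℝ × ℝ) : ℝ × ℝ × ℝ :=
  (-(1 / (4 * π))) • ∫ a : ℝ,
    (1 / Real.sqrt (vnorm (x - vrot a y) ^ 2 + a ^ 2) ^ 3) •
      cross3 (x.1 - (vrot a y).1, x.2 - (vrot a y).2, -a)
        (xi3 ((vrot a y).1, (vrot a y).2, a))

/-- The velocity `U(x) = ∫ K(x,y) w(y) dy ∈ ℝ³`. -/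
noncomputable def Uvel (w : ℝ × ℝ → ℝ) (x : ℝ × ℝ) : ℝ × ℝ × ℝ :=
  ∫ y : ℝ × ℝ, w y • biotK x y

/-- The planar helical velocity field `Hw(x) = (U¹,U²) + (−x₂,x₁) U³`. -/
noncomputable def Hvel (w : ℝ × ℝ → ℝ) (x : ℝ × ℝ) : ℝ × ℝ :=
  ((Uvel w x).1, (Uvel w x).2.1) + (Uvel w x).2.2 • vperp x

/-!
The two terms are bounded separately. Since `|R_a y - y| ≤ |y| |a|`, the distance from `(x, 0)`
to the helix point `(R_a y, a)` satisfies `|x - y|² ≤ 2 ⟨y⟩² (|x - R_a y|² + a²)`, so integrating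
the kernel over `a` gives `|K(x, y)| ≤ ⟨y⟩² / |x - y|`. Near the diagonal the factor `⟨y⟩²` is
absorbed by the `L^∞₄` bound, leaving the integrable singularity `1_{|z| ≤ 1} |z|⁻¹`; away from
it `|K| ≤ ⟨y⟩²` is absorbed by the `L¹₄` norm. Hence `U` is bounded uniformly, `|Hw(x)| ≲ ⟨x⟩`,
and `∫ w Hw` is controlled by `‖w‖_{L¹₄}`. The logarithmic term is dominated by the same
singularity.
-/

open Set Metric

lemma norm_le_vnorm (x : ℝ × ℝ) : ‖x‖ ≤ vnorm x := by
  rw [Prod.norm_def]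
  apply max_le <;> rw [Real.norm_eq_abs, ← Real.sqrt_sq_eq_abs] <;>
    exact Real.sqrt_le_sqrt (by nlinarith [sq_nonneg x.1, sq_nonneg x.2])

lemma vnorm_le_two_mul_norm (x : ℝ × ℝ) : vnorm x ≤ 2 * ‖x‖ := by
  have h₁ : |x.1| ≤ ‖x‖ := norm_fst_le x
  have h₂ : |x.2| ≤ ‖x‖ := norm_snd_le x
  rw [vnorm, Real.sqrt_le_iff]
  refine ⟨by positivity, ?_⟩
  nlinarith [sq_abs x.1, sq_abs x.2, abs_nonneg x.1, abs_nonneg x.2]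

lemma vnorm_pos {x : ℝ × ℝ} (hx : x ≠ 0) : 0 < vnorm x :=
  (norm_pos_iff.mpr hx).trans_le (norm_le_vnorm x)

lemma vnorm_sq (x : ℝ × ℝ) : vnorm x ^ 2 = x.1 ^ 2 + x.2 ^ 2 := Real.sq_sqrt (by positivity)

lemma jap_sq (x : ℝ × ℝ) : jap x ^ 2 = 1 + x.1 ^ 2 + x.2 ^ 2 := Real.sq_sqrt (by positivity)

lemma one_le_jap (x : ℝ × ℝ) : 1 ≤ jap x :=
  Real.one_le_sqrt.mpr (by nlinarith [sq_nonneg x.1, sq_nonneg x.2])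

lemma jap_pos (x : ℝ × ℝ) : 0 < jap x := one_pos.trans_le (one_le_jap x)

lemma norm_le_jap (x : ℝ × ℝ) : ‖x‖ ≤ jap x :=
  (norm_le_vnorm x).trans (Real.sqrt_le_sqrt (by linarith))

lemma norm_vperp (x : ℝ × ℝ) : ‖vperp x‖ = ‖x‖ := by
  simp only [vperp, Prod.norm_def, norm_neg, max_comm]

lemma norm_le_norm3 (v : ℝ × ℝ × ℝ) : ‖v‖ ≤ norm3 v := by
  rw [Prod.norm_def, Prod.norm_def]
  refine max_le ?_ (max_le ?_ ?_) <;> rw [Real.norm_eq_abs, ← Real.sqrt_sq_eq_abs] <;>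
    exact Real.sqrt_le_sqrt (by nlinarith [sq_nonneg v.1, sq_nonneg v.2.1, sq_nonneg v.2.2])

lemma norm3_smul (c : ℝ) (v : ℝ × ℝ × ℝ) : norm3 (c • v) = |c| * norm3 v := by
  rw [norm3, norm3, ← Real.sqrt_sq_eq_abs, ← Real.sqrt_mul (sq_nonneg c)]
  congr 1
  simp only [Prod.smul_fst, Prod.smul_snd, smul_eq_mul]
  ring

lemma norm3_cross3_le (u v : ℝ × ℝ × ℝ) : norm3 (cross3 u v) ≤ norm3 u * norm3 v := by
  rw [norm3, norm3, norm3, ← Real.sqrt_mul (by positivity)]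
  refine Real.sqrt_le_sqrt ?_
  simp only [cross3]
  nlinarith [sq_nonneg (u.1 * v.1 + u.2.1 * v.2.1 + u.2.2 * v.2.2)]

lemma vrot_sq (a : ℝ) (y : ℝ × ℝ) :
    (vrot a y).1 ^ 2 + (vrot a y).2 ^ 2 = y.1 ^ 2 + y.2 ^ 2 := by
  simp only [vrot]
  linear_combination (y.1 ^ 2 + y.2 ^ 2) * Real.sin_sq_add_cos_sq a

lemma vnorm_vrot_sub_sq_le (a : ℝ) (y : ℝ × ℝ) :
    vnorm (vrot a y - y) ^ 2 ≤ (y.1 ^ 2 + y.2 ^ 2) * a ^ 2 := by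
  have hcos : 2 - 2 * Real.cos a ≤ a ^ 2 := by linarith [Real.one_sub_sq_div_two_le_cos (x := a)]
  have hchord : vnorm (vrot a y - y) ^ 2 = (y.1 ^ 2 + y.2 ^ 2) * (2 - 2 * Real.cos a) := by
    simp only [vnorm_sq, Prod.fst_sub, Prod.snd_sub, vrot]
    linear_combination (y.1 ^ 2 + y.2 ^ 2) * Real.sin_sq_add_cos_sq a
  rw [hchord]
  exact mul_le_mul_of_nonneg_left hcos (by positivity)

lemma vnorm_sub_sq_le (x y : ℝ × ℝ) (a : ℝ) :
    vnorm (x - y) ^ 2 ≤ 2 * jap y ^ 2 * (vnorm (x - vrot a y) ^ 2 + a ^ 2) := by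
  have htri :
      vnorm (x - y) ^ 2 ≤ 2 * vnorm (x - vrot a y) ^ 2 + 2 * vnorm (vrot a y - y) ^ 2 := by
    simp only [vnorm_sq, Prod.fst_sub, Prod.snd_sub]
    nlinarith [sq_nonneg (x.1 - 2 * (vrot a y).1 + y.1),
      sq_nonneg (x.2 - 2 * (vrot a y).2 + y.2)]
  nlinarith [vnorm_vrot_sub_sq_le a y, jap_sq y, sq_nonneg a, sq_nonneg (vnorm (x - vrot a y)),
    sq_nonneg y.1, sq_nonneg y.2]

lemma integrable_inv_sq_add_sq {c : ℝ} (hc : c ≠ 0) :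
    Integrable fun x : ℝ => (c ^ 2 + x ^ 2)⁻¹ := by
  have h := (integrable_inv_one_add_sq.comp_mul_left' (inv_ne_zero hc)).const_mul (c⁻¹ ^ 2)
  refine h.congr (ae_of_all _ fun x => ?_)
  field_simp

lemma integral_univ_inv_sq_add_sq {c : ℝ} (hc : 0 < c) : ∫ x : ℝ, (c ^ 2 + x ^ 2)⁻¹ = π / c := by
  have h : (fun x : ℝ => (c ^ 2 + x ^ 2)⁻¹) = fun x => c⁻¹ ^ 2 * (1 + (c⁻¹ * x) ^ 2)⁻¹ := by
    funext x; field_simp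
  rw [h, MeasureTheory.integral_const_mul,
    Measure.integral_comp_mul_left (fun t : ℝ => (1 + t ^ 2)⁻¹), integral_univ_inv_one_add_sq,
    inv_inv, abs_of_pos hc, smul_eq_mul]
  field_simp

noncomputable def biotIntegrand (x y : ℝ × ℝ) (a : ℝ) : ℝ × ℝ × ℝ :=
  (1 / Real.sqrt (vnorm (x - vrot a y) ^ 2 + a ^ 2) ^ 3) •
    cross3 (x.1 - (vrot a y).1, x.2 - (vrot a y).2, -a) (xi3 ((vrot a y).1, (vrot a y).2, a))

lemma biotK_eq (x y : ℝ × ℝ) : biotK x y = (-(1 / (4 * π))) • ∫ a, biotIntegrand x y a := rfl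

lemma norm_biotIntegrand_le (x y : ℝ × ℝ) (a : ℝ) :
    ‖biotIntegrand x y a‖ ≤ jap y / (vnorm (x - vrot a y) ^ 2 + a ^ 2) := by
  set D := vnorm (x - vrot a y) ^ 2 + a ^ 2
  have hD : 0 ≤ D := by positivity
  have hu : norm3 (x.1 - (vrot a y).1, x.2 - (vrot a y).2, -a) = Real.sqrt D := by
    simp only [norm3, D, vnorm_sq, Prod.fst_sub, Prod.snd_sub, neg_sq]
  have hξ : norm3 (xi3 ((vrot a y).1, (vrot a y).2, a)) = jap y := by
    simp only [norm3, xi3, jap, neg_sq, one_pow]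
    rw [add_comm _ 1, add_assoc, add_comm ((vrot a y).2 ^ 2), vrot_sq]
  have hcancel : 1 / Real.sqrt D ^ 3 * (Real.sqrt D * jap y) = jap y / D := by
    rcases (Real.sqrt_nonneg D).eq_or_lt with h | h
    · rw [← h, Real.sqrt_eq_zero hD |>.mp h.symm]; simp
    · conv_rhs => rw [← Real.sq_sqrt hD]
      field_simp
  have hk : 0 ≤ 1 / Real.sqrt D ^ 3 := by positivity
  calc ‖biotIntegrand x y a‖ ≤ norm3 (biotIntegrand x y a) := norm_le_norm3 _
    _ ≤ 1 / Real.sqrt D ^ 3 * (Real.sqrt D * jap y) := by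
        rw [biotIntegrand, norm3_smul, abs_of_nonneg hk, ← hu, ← hξ]
        exact mul_le_mul_of_nonneg_left (norm3_cross3_le _ _) (hu ▸ hk)
    _ = jap y / D := hcancel

lemma norm_biotK_le {x y : ℝ × ℝ} (hxy : x ≠ y) : ‖biotK x y‖ ≤ jap y ^ 2 / vnorm (x - y) := by
  set v := vnorm (x - y)
  have hv : 0 < v := vnorm_pos (sub_ne_zero.mpr hxy)
  have hj := jap_pos y
  set ρ := v / (2 * jap y)
  have hρ : 0 < ρ := div_pos hv (by positivity)
  have hbound : ∀ a, ‖biotIntegrand x y a‖ ≤ 2 * jap y * (ρ ^ 2 + a ^ 2)⁻¹ := by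
    intro a
    set D := vnorm (x - vrot a y) ^ 2 + a ^ 2
    have hρD : ρ ^ 2 ≤ D := by
      have h := vnorm_sub_sq_le x y a
      have hρsq : ρ ^ 2 * (4 * jap y ^ 2) = v ^ 2 := by simp only [ρ]; field_simp; ring
      nlinarith [sq_nonneg (jap y), sq_nonneg ρ]
    have haD : a ^ 2 ≤ D := le_add_of_nonneg_left (sq_nonneg _)
    refine (norm_biotIntegrand_le x y a).trans ?_
    rw [← div_eq_mul_inv, div_le_div_iff₀ ((pow_pos hρ 2).trans_le hρD) (by positivity)]
    nlinarith
  calc ‖biotK x y‖ = (4 * π)⁻¹ * ‖∫ a, biotIntegrand x y a‖ := by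
        rw [biotK_eq, norm_smul, norm_neg, one_div, norm_inv, Real.norm_of_nonneg (by positivity)]
    _ ≤ (4 * π)⁻¹ * ∫ a, 2 * jap y * (ρ ^ 2 + a ^ 2)⁻¹ := by
        gcongr
        exact norm_integral_le_of_norm_le ((integrable_inv_sq_add_sq hρ.ne').const_mul _)
          (ae_of_all _ hbound)
    _ = jap y ^ 2 / v := by
        rw [MeasureTheory.integral_const_mul, integral_univ_inv_sq_add_sq hρ]
        simp only [ρ]
        field_simp
        ring

lemma integrable_indicator_closedBall_inv_norm {E : Type*} [NormedAddCommGroup E]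
    [NormedSpace ℝ E] [FiniteDimensional ℝ E] [MeasurableSpace E] [BorelSpace E]
    (μ : Measure E) [μ.IsAddHaarMeasure] (hE : 2 ≤ Module.finrank ℝ E) (r : ℝ) :
    Integrable ((closedBall (0 : E) r).indicator fun z => ‖z‖⁻¹) μ := by
  rw [integrable_indicator_iff measurableSet_closedBall]
  refine (integrableOn_ball_of_norm_le_rpow (C := 1) (α := 1) (r := r + 1) (by omega)
    (by exact_mod_cast hE) (ae_of_all _ fun z => ?_)
    measurable_norm.inv.aestronglyMeasurable).mono_set (closedBall_subset_ball (by linarith))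
  rw [Pi.inv_apply, Real.rpow_neg_one, one_mul, norm_inv, norm_norm]

noncomputable def truncInvNorm : ℝ × ℝ → ℝ :=
  (closedBall (0 : ℝ × ℝ) 1).indicator fun z => ‖z‖⁻¹

lemma truncInvNorm_nonneg (z : ℝ × ℝ) : 0 ≤ truncInvNorm z :=
  indicator_nonneg (fun _ _ => inv_nonneg.mpr (norm_nonneg _)) z

lemma truncInvNorm_of_norm_le {z : ℝ × ℝ} (hz : ‖z‖ ≤ 1) : truncInvNorm z = ‖z‖⁻¹ :=
  indicator_of_mem (mem_closedBall_zero_iff.mpr hz) _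

lemma integrable_truncInvNorm : Integrable truncInvNorm :=
  integrable_indicator_closedBall_inv_norm volume (by simp) 1

lemma ae_norm_le_toReal_eLpNorm_top {α E : Type*} [MeasurableSpace α] {μ : Measure α}
    [NormedAddCommGroup E] {f : α → E} (hf : eLpNorm f ⊤ μ < ⊤) :
    ∀ᵐ x ∂μ, ‖f x‖ ≤ (eLpNorm f ⊤ μ).toReal := by
  filter_upwards [ae_le_eLpNormEssSup (μ := μ) (f := f)] with x hx
  rw [← toReal_enorm, eLpNorm_exponent_top]
  exact ENNReal.toReal_mono (eLpNorm_exponent_top (f := f) ▸ hf.ne) hx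

lemma abs_log_one_div_le_truncInvNorm (z : ℝ × ℝ) :
    |if vnorm z ≤ 1 then Real.log (1 / vnorm z) else 0| ≤ truncInvNorm z := by
  split_ifs with hz
  · rcases eq_or_ne z 0 with rfl | hz0
    · simpa [vnorm] using truncInvNorm_nonneg 0
    have hv := vnorm_pos hz0
    have hn := norm_pos_iff.mpr hz0
    rw [truncInvNorm_of_norm_le ((norm_le_vnorm z).trans hz),
      abs_of_nonneg (Real.log_nonneg ((one_le_div hv).mpr hz))]
    calc Real.log (1 / vnorm z) ≤ 1 / vnorm z :=
          (Real.log_le_sub_one_of_pos (by positivity)).trans (sub_le_self _ zero_le_one)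
      _ ≤ ‖z‖⁻¹ := by rw [one_div]; exact inv_anti₀ hn (norm_le_vnorm z)
  · simpa using truncInvNorm_nonneg z

lemma norm_Hvel_le (w : ℝ × ℝ → ℝ) (x : ℝ × ℝ) : ‖Hvel w x‖ ≤ 2 * jap x * ‖Uvel w x‖ := by
  have h₁ : ‖((Uvel w x).1, (Uvel w x).2.1)‖ ≤ ‖Uvel w x‖ := by
    rw [Prod.norm_def]
    exact max_le (norm_fst_le (Uvel w x)) ((norm_fst_le _).trans (norm_snd_le (Uvel w x)))
  have h₂ : ‖(Uvel w x).2.2‖ ≤ ‖Uvel w x‖ := (norm_snd_le _).trans (norm_snd_le _)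
  have h₃ : ‖vperp x‖ ≤ jap x := (norm_vperp x).trans_le (norm_le_jap x)
  calc ‖Hvel w x‖ ≤ ‖((Uvel w x).1, (Uvel w x).2.1)‖ + ‖(Uvel w x).2.2‖ * ‖vperp x‖ :=
        (norm_add_le _ _).trans_eq (by rw [norm_smul])
    _ ≤ ‖Uvel w x‖ + ‖Uvel w x‖ * jap x := by gcongr
    _ ≤ 2 * jap x * ‖Uvel w x‖ := by nlinarith [one_le_jap x, norm_nonneg (Uvel w x)]

section WeightedBounds

variable {w : ℝ × ℝ → ℝ} {S : ℝ}

lemma abs_le_of_jap_pow_mul_abs_le {x : ℝ × ℝ} (n : ℕ) (h : jap x ^ n * |w x| ≤ S) : |w x| ≤ S :=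
  (le_mul_of_one_le_left (abs_nonneg _) (one_le_pow₀ (one_le_jap x))).trans h

lemma abs_mul_norm_biotK_le {x y : ℝ × ℝ} (hxy : x ≠ y) (hS : jap y ^ 4 * |w y| ≤ S) :
    |w y| * ‖biotK x y‖ ≤ S * truncInvNorm (x - y) + jap y ^ 4 * |w y| := by
  have hK := mul_le_mul_of_nonneg_left (norm_biotK_le hxy) (abs_nonneg (w y))
  have hv := vnorm_pos (sub_ne_zero.mpr hxy)
  have hn := norm_pos_iff.mpr (sub_ne_zero.mpr hxy)
  have hj : |w y| * jap y ^ 2 ≤ jap y ^ 4 * |w y| := by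
    rw [mul_comm]
    exact mul_le_mul_of_nonneg_right (pow_le_pow_right₀ (one_le_jap y) (by norm_num))
      (abs_nonneg _)
  have hS0 : 0 ≤ S := (by positivity : 0 ≤ jap y ^ 4 * |w y|).trans hS
  rcases le_or_gt ‖x - y‖ 1 with hnear | hfar
  · rw [truncInvNorm_of_norm_le hnear]
    calc |w y| * ‖biotK x y‖ ≤ |w y| * jap y ^ 2 * (vnorm (x - y))⁻¹ := by
          rwa [mul_div_assoc', div_eq_mul_inv] at hK
      _ ≤ S * ‖x - y‖⁻¹ := by
          gcongr
          · exact hj.trans hS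
          · exact norm_le_vnorm _
      _ ≤ S * ‖x - y‖⁻¹ + jap y ^ 4 * |w y| := le_add_of_nonneg_right (by positivity)
  · have hfar' : 1 ≤ vnorm (x - y) := hfar.le.trans (norm_le_vnorm _)
    calc |w y| * ‖biotK x y‖ ≤ |w y| * jap y ^ 2 :=
          hK.trans (by gcongr; exact div_le_self (by positivity) hfar')
      _ ≤ S * truncInvNorm (x - y) + jap y ^ 4 * |w y| :=
          hj.trans (le_add_of_nonneg_left (mul_nonneg hS0 (truncInvNorm_nonneg _)))

variable (hI : Integrable fun y => jap y ^ 4 * |w y|) (hS : ∀ᵐ y, jap y ^ 4 * |w y| ≤ S)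
include hI hS

lemma norm_Uvel_le (x : ℝ × ℝ) :
    ‖Uvel w x‖ ≤ S * (∫ z, truncInvNorm z) + ∫ y, jap y ^ 4 * |w y| := by
  have hshift : Integrable fun y => truncInvNorm (x - y) :=
    integrable_truncInvNorm.comp_sub_left x
  have hne : ∀ᵐ y : ℝ × ℝ, y ≠ x := compl_mem_ae_iff.mpr (measure_singleton x)
  calc ‖Uvel w x‖ ≤ ∫ y, (S * truncInvNorm (x - y) + jap y ^ 4 * |w y|) := by
        refine norm_integral_le_of_norm_le ((hshift.const_mul S).add hI) ?_
        filter_upwards [hS, hne] with y hy hyx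
        rw [norm_smul, Real.norm_eq_abs]
        exact abs_mul_norm_biotK_le (Ne.symm hyx) hy
    _ = S * (∫ z, truncInvNorm z) + ∫ y, jap y ^ 4 * |w y| := by
        rw [integral_add (hshift.const_mul S) hI, MeasureTheory.integral_const_mul,
          integral_sub_left_eq_self truncInvNorm volume x]

lemma norm_integral_smul_Hvel_le :
    ‖∫ x, w x • Hvel w x‖ ≤
      2 * (S * (∫ z, truncInvNorm z) + ∫ y, jap y ^ 4 * |w y|) * ∫ y, jap y ^ 4 * |w y| := by
  set M := S * (∫ z, truncInvNorm z) + ∫ y, jap y ^ 4 * |w y|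
  rw [← MeasureTheory.integral_const_mul]
  refine norm_integral_le_of_norm_le (hI.const_mul _) (ae_of_all _ fun x => ?_)
  have hU := norm_Uvel_le hI hS x
  have hjap : jap x ≤ jap x ^ 4 := le_self_pow₀ (one_le_jap x) (by norm_num)
  rw [norm_smul, Real.norm_eq_abs]
  calc |w x| * ‖Hvel w x‖ ≤ |w x| * (2 * jap x * M) := by
        gcongr
        exact (norm_Hvel_le w x).trans
          (mul_le_mul_of_nonneg_left hU (mul_pos two_pos (jap_pos x)).le)
    _ ≤ 2 * M * (jap x ^ 4 * |w x|) := by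
        have hM : 0 ≤ M := (norm_nonneg _).trans hU
        nlinarith [mul_le_mul_of_nonneg_left hjap (mul_nonneg hM (abs_nonneg (w x)))]

lemma norm_integral_log_term_le :
    ‖∫ x, ∫ y, (((if vnorm (x - y) ≤ 1 then Real.log (1 / vnorm (x - y)) else 0)
        * w x * w y) / jap x) • vperp x‖ ≤
      S * (∫ z, truncInvNorm z) * ∫ y, jap y ^ 4 * |w y| := by
  set c := ∫ z, truncInvNorm z
  have hS0 : 0 ≤ S := by
    obtain ⟨y, hy⟩ := hS.exists
    exact (by positivity : 0 ≤ jap y ^ 4 * |w y|).trans hy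
  have hc : 0 ≤ c := integral_nonneg truncInvNorm_nonneg
  rw [← MeasureTheory.integral_const_mul]
  refine norm_integral_le_of_norm_le (hI.const_mul _) (ae_of_all _ fun x => ?_)
  have hinner : ‖∫ y, (((if vnorm (x - y) ≤ 1 then Real.log (1 / vnorm (x - y)) else 0)
      * w x * w y) / jap x) • vperp x‖ ≤ ∫ y, |w x| * S * truncInvNorm (x - y) := by
    refine norm_integral_le_of_norm_le
      ((integrable_truncInvNorm.comp_sub_left x).const_mul _) ?_
    filter_upwards [hS] with y hy
    have hL := abs_log_one_div_le_truncInvNorm (x - y)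
    have hperp : ‖vperp x‖ / jap x ≤ 1 :=
      div_le_one_of_le₀ ((norm_vperp x).trans_le (norm_le_jap x)) (jap_pos x).le
    rw [norm_smul, Real.norm_eq_abs, abs_div, abs_mul, abs_mul, abs_of_pos (jap_pos x),
      div_mul_eq_mul_div, mul_div_assoc]
    calc _ ≤ |if vnorm (x - y) ≤ 1 then Real.log (1 / vnorm (x - y)) else 0| * |w x| * |w y| :=
          mul_le_of_le_one_right (by positivity) hperp
      _ ≤ truncInvNorm (x - y) * |w x| * S :=
          mul_le_mul (mul_le_mul_of_nonneg_right hL (abs_nonneg _))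
            (abs_le_of_jap_pow_mul_abs_le 4 hy) (abs_nonneg _)
            (mul_nonneg (truncInvNorm_nonneg _) (abs_nonneg _))
      _ = |w x| * S * truncInvNorm (x - y) := by ring
  refine hinner.trans ?_
  rw [MeasureTheory.integral_const_mul, integral_sub_left_eq_self truncInvNorm volume x]
  calc |w x| * S * c = S * c * |w x| := by ring
    _ ≤ S * c * (jap x ^ 4 * |w x|) :=
        mul_le_mul_of_nonneg_left (le_mul_of_one_le_left (abs_nonneg _)
          (one_le_pow₀ (one_le_jap x))) (mul_nonneg hS0 hc)

end WeightedBounds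

/-- the self-interaction `∫ w Hw` equals
`−(1/4π) ∬ log(1/|x−y|) 1_{|x−y|≤1} (x^⊥/⟨x⟩) w(x)w(y)` up to an error
`C (‖w‖_{L¹₄} + ‖w‖_{L^∞₄})²`. -/
theorem stmt_19 : ∃ C > (0:ℝ), ∀ w : ℝ × ℝ → ℝ, Measurable w →
    Integrable (fun x : ℝ × ℝ => jap x ^ 4 * |w x|) →
    eLpNorm (fun x : ℝ × ℝ => jap x ^ 4 * w x) ⊤ volume < ⊤ →
    vnorm ((∫ x : ℝ × ℝ, w x • Hvel w x)
        + (1 / (4 * π)) • ∫ x : ℝ × ℝ, ∫ y : ℝ × ℝ,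
            (((if vnorm (x - y) ≤ 1 then Real.log (1 / vnorm (x - y)) else 0)
                * w x * w y) / jap x) • vperp x)
      ≤ C * ((∫ x : ℝ × ℝ, jap x ^ 4 * |w x|)
          + (eLpNorm (fun x : ℝ × ℝ => jap x ^ 4 * w x) ⊤ volume).toReal) ^ 2 := by
  set c := ∫ z, truncInvNorm z
  have hc : 0 ≤ c := integral_nonneg truncInvNorm_nonneg
  refine ⟨2 * (3 * c + 2), by positivity, fun w _ hI hSfin => ?_⟩
  set I := ∫ x, jap x ^ 4 * |w x|
  set S := (eLpNorm (fun x : ℝ × ℝ => jap x ^ 4 * w x) ⊤ volume).toReal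
  have hS : ∀ᵐ y, jap y ^ 4 * |w y| ≤ S := by
    filter_upwards [ae_norm_le_toReal_eLpNorm_top hSfin] with y hy
    rwa [Real.norm_eq_abs, abs_mul, abs_of_nonneg (by positivity)] at hy
  have hI0 : 0 ≤ I := integral_nonneg fun x => by positivity
  have hS0 : 0 ≤ S := ENNReal.toReal_nonneg
  have hA : ‖∫ x, w x • Hvel w x‖ ≤ 2 * (S * c + I) * I := norm_integral_smul_Hvel_le hI hS
  have hB : ‖_‖ ≤ S * c * I := norm_integral_log_term_le hI hS
  have hπ : ‖(1 / (4 * π) : ℝ)‖ ≤ 1 := by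
    rw [Real.norm_of_nonneg (by positivity), div_le_one (by positivity)]
    linarith [Real.pi_gt_three]
  have hsum := (norm_add_le _ _).trans <| add_le_add hA <|
    (norm_smul_le _ _).trans <| (mul_le_of_le_one_left (norm_nonneg _) hπ).trans hB
  calc _ ≤ 2 * ‖_‖ := vnorm_le_two_mul_norm _
    _ ≤ 2 * (2 * (S * c + I) * I + S * c * I) := by gcongr
    _ ≤ 2 * (3 * c + 2) * (I + S) ^ 2 := by
        nlinarith [mul_nonneg hc (mul_nonneg hS0 hI0), mul_nonneg hc (sq_nonneg S),
          mul_nonneg hc (sq_nonneg I), mul_nonneg hI0 hS0]
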